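/- arXiv:2109.09926 — 2 statements merged into one kernel-verified Lean document; each statement's English description precedes it below -/
import Mathlib

section
/- Suppose γ : ℝ → ℂ is measurable with |γ(σ)| ≤ F·(1+σ²)^{K/2} for σ ≥ 0 and γ = 0 for σ < 0, where F > 0 and K ≥ 0. Then there exist R > 0 and Σ_0 > 0 such that for all Σ > Σ_0 and all t ∈ ℂ with Re t > 0, |∫_Σ^∞ γ(σ) e^{-σt} dσ| ≤ R·F·(Re t)^{-(K+1)}·e^{-Σ·Re t}·(1 + (Σ·Re t)²)^{K/2}. -/
/-!
Put `σ = S + u` with `S ≥ 1`. Then `(1 + σ²)^{K/2} ≤ 2^{K/2} 2^K (S^K + u^K)`, so the tail is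
dominated by `e^{-S Re t}` times the Laplace transform of `S^K + u^K`, namely
`S^K / Re t + Γ(K+1) (Re t)^{-(K+1)} = ((S Re t)^K + Γ(K+1)) (Re t)^{-(K+1)}`, and
`(S Re t)^K + Γ(K+1) ≤ (1 + Γ(K+1)) (1 + (S Re t)²)^{K/2}`.
-/

open MeasureTheory Set Real

lemma setIntegral_Ioi_eq_setIntegral_Ioi_zero_add {E : Type*} [NormedAddCommGroup E]
    [NormedSpace ℝ E] (f : ℝ → E) (S : ℝ) :
    ∫ σ in Ioi S, f σ = ∫ u in Ioi 0, f (u + S) := by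
  rw [← (measurePreserving_add_right volume S).setIntegral_image_emb
    (MeasurableEquiv.addRight S).measurableEmbedding f (Ioi 0), image_add_const_Ioi, zero_add]

lemma rpow_add_le_two_rpow_mul_add {K a b : ℝ} (hK : 0 ≤ K) (ha : 0 ≤ a) (hb : 0 ≤ b) :
    (a + b) ^ K ≤ 2 ^ K * (a ^ K + b ^ K) := by
  wlog hab : a ≤ b generalizing a b
  · simpa only [add_comm] using this hb ha (le_of_not_ge hab)
  calc (a + b) ^ K ≤ (2 * b) ^ K := rpow_le_rpow (by positivity) (by linarith) hK
    _ = 2 ^ K * b ^ K := mul_rpow zero_le_two hb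
    _ ≤ 2 ^ K * (a ^ K + b ^ K) := by gcongr; exact le_add_of_nonneg_left (by positivity)

lemma sq_rpow_half {a : ℝ} (ha : 0 ≤ a) (K : ℝ) : (a ^ 2) ^ (K / 2) = a ^ K := by
  rw [← rpow_natCast_mul ha, Nat.cast_ofNat, mul_div_cancel₀ K two_ne_zero]

lemma rpow_le_one_add_sq_rpow_half {K a : ℝ} (hK : 0 ≤ K) (ha : 0 ≤ a) :
    a ^ K ≤ (1 + a ^ 2) ^ (K / 2) := by
  rw [← sq_rpow_half ha K]
  exact rpow_le_rpow (by positivity) (by linarith) (by linarith)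

lemma one_add_sq_rpow_half_le {K σ : ℝ} (hK : 0 ≤ K) (hσ : 1 ≤ σ) :
    (1 + σ ^ 2) ^ (K / 2) ≤ 2 ^ (K / 2) * σ ^ K := by
  calc (1 + σ ^ 2) ^ (K / 2) ≤ (2 * σ ^ 2) ^ (K / 2) :=
        rpow_le_rpow (by positivity) (by nlinarith) (by linarith)
    _ = 2 ^ (K / 2) * σ ^ K := by
        rw [mul_rpow zero_le_two (by positivity), sq_rpow_half (by linarith)]

lemma integrableOn_Ioi_rpow_mul_exp_neg_mul {K x : ℝ} (hK : -1 < K) (hx : 0 < x) :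
    IntegrableOn (fun u ↦ u ^ K * exp (-(x * u))) (Ioi 0) := by
  simpa only [rpow_one, neg_mul] using integrableOn_rpow_mul_exp_neg_mul_rpow hK zero_lt_one hx

lemma integral_Ioi_rpow_mul_exp_neg_mul {K x : ℝ} (hK : -1 < K) (hx : 0 < x) :
    ∫ u in Ioi 0, u ^ K * exp (-(x * u)) = Gamma (K + 1) * x ^ (-(K + 1)) := by
  have h := integral_rpow_mul_exp_neg_mul_Ioi (a := K + 1) (by linarith) hx
  rw [add_sub_cancel_right] at h
  rw [h, one_div, inv_rpow hx.le, rpow_neg hx.le, mul_comm]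

lemma integrableOn_Ioi_add_rpow_mul_exp_neg_mul {K x : ℝ} (hK : -1 < K) (hx : 0 < x) (S : ℝ) :
    IntegrableOn (fun u ↦ (S ^ K + u ^ K) * exp (-(x * u))) (Ioi 0) := by
  have hint := integrableOn_Ioi_rpow_mul_exp_neg_mul neg_one_lt_zero hx
  simp only [rpow_zero, one_mul] at hint
  simp_rw [add_mul]
  exact (hint.const_mul (S ^ K)).add (integrableOn_Ioi_rpow_mul_exp_neg_mul hK hx)

lemma integral_Ioi_add_rpow_mul_exp_neg_mul_le {K x S : ℝ} (hK : 0 ≤ K) (hx : 0 < x)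
    (hS : 0 ≤ S) :
    ∫ u in Ioi 0, (S ^ K + u ^ K) * exp (-(x * u)) ≤
      (1 + Gamma (K + 1)) * x ^ (-(K + 1)) * (1 + (S * x) ^ 2) ^ (K / 2) := by
  have hexp := integral_Ioi_rpow_mul_exp_neg_mul neg_one_lt_zero hx
  simp only [rpow_zero, one_mul, zero_add, Gamma_one] at hexp
  have hint := integrableOn_Ioi_rpow_mul_exp_neg_mul neg_one_lt_zero hx
  simp only [rpow_zero, one_mul] at hint
  have hSK : S ^ K * x ^ (-1 : ℝ) = (S * x) ^ K * x ^ (-(K + 1)) := by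
    rw [mul_rpow hS hx.le, mul_assoc, ← rpow_add hx]
    ring_nf
  have hP : (S * x) ^ K ≤ (1 + (S * x) ^ 2) ^ (K / 2) :=
    rpow_le_one_add_sq_rpow_half hK (by positivity)
  have hP1 : 1 ≤ (1 + (S * x) ^ 2) ^ (K / 2) :=
    one_le_rpow (by nlinarith) (by linarith)
  have hsplit : ∫ u in Ioi 0, (S ^ K + u ^ K) * exp (-(x * u)) =
      (S * x) ^ K * x ^ (-(K + 1)) + Gamma (K + 1) * x ^ (-(K + 1)) := by
    simp only [add_mul]
    rw [integral_add (hint.const_mul _) (integrableOn_Ioi_rpow_mul_exp_neg_mul (by linarith) hx),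
      integral_const_mul, hexp, integral_Ioi_rpow_mul_exp_neg_mul (by linarith) hx, hSK]
  rw [hsplit]
  have hX : 0 ≤ x ^ (-(K + 1)) := by positivity
  have hΓ : 0 ≤ Gamma (K + 1) := Gamma_nonneg_of_nonneg (by linarith)
  calc (S * x) ^ K * x ^ (-(K + 1)) + Gamma (K + 1) * x ^ (-(K + 1))
      ≤ (1 + (S * x) ^ 2) ^ (K / 2) * x ^ (-(K + 1)) +
          Gamma (K + 1) * (x ^ (-(K + 1)) * (1 + (S * x) ^ 2) ^ (K / 2)) :=
        add_le_add (mul_le_mul_of_nonneg_right hP hX)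
          (mul_le_mul_of_nonneg_left (le_mul_of_one_le_right hX hP1) hΓ)
    _ = _ := by ring

lemma norm_mul_cexp_neg_mul_le {K F S u : ℝ} {γ : ℝ → ℂ} (hK : 0 ≤ K) (hF : 0 ≤ F)
    (hbd : ∀ σ : ℝ, 0 ≤ σ → ‖γ σ‖ ≤ F * (1 + σ ^ 2) ^ (K / 2)) (hS : 1 ≤ S) (hu : 0 ≤ u)
    (t : ℂ) :
    ‖γ (u + S) * Complex.exp (-((u + S : ℝ) : ℂ) * t)‖ ≤
      2 ^ (K / 2) * 2 ^ K * F * exp (-S * t.re) *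
        ((S ^ K + u ^ K) * exp (-(t.re * u))) := by
  have hexp : ‖Complex.exp (-((u + S : ℝ) : ℂ) * t)‖ =
      exp (-S * t.re) * exp (-(t.re * u)) := by
    rw [Complex.norm_exp, ← exp_add]
    simp only [neg_mul, Complex.neg_re, Complex.mul_re, Complex.ofReal_re, Complex.ofReal_im,
      zero_mul, sub_zero]
    ring_nf
  have hweight : (1 + (u + S) ^ 2) ^ (K / 2) ≤ 2 ^ (K / 2) * (2 ^ K * (S ^ K + u ^ K)) := by
    calc (1 + (u + S) ^ 2) ^ (K / 2) ≤ 2 ^ (K / 2) * (u + S) ^ K :=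
          one_add_sq_rpow_half_le hK (by linarith : 1 ≤ u + S)
      _ ≤ 2 ^ (K / 2) * (2 ^ K * (S ^ K + u ^ K)) := by
          rw [add_comm u]
          gcongr
          exact rpow_add_le_two_rpow_mul_add hK (by linarith : 0 ≤ S) hu
  rw [norm_mul, hexp]
  calc ‖γ (u + S)‖ * (exp (-S * t.re) * exp (-(t.re * u)))
      ≤ F * (1 + (u + S) ^ 2) ^ (K / 2) * (exp (-S * t.re) * exp (-(t.re * u))) := by
        gcongr
        exact hbd _ (by linarith)
    _ ≤ F * (2 ^ (K / 2) * (2 ^ K * (S ^ K + u ^ K))) *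
          (exp (-S * t.re) * exp (-(t.re * u))) :=
        mul_le_mul_of_nonneg_right (mul_le_mul_of_nonneg_left hweight hF) (by positivity)
    _ = _ := by ring

theorem laplace_tail_quantitative_general (K F : ℝ) (hK : 0 ≤ K) (hF : 0 < F)
    (γ : ℝ → ℂ)
    (hbd : ∀ σ : ℝ, 0 ≤ σ → ‖γ σ‖ ≤ F * (1 + σ ^ 2) ^ (K / 2)) :
    ∃ R : ℝ, 0 < R ∧ ∃ S₀ : ℝ, 0 < S₀ ∧ ∀ S : ℝ, S₀ < S → ∀ t : ℂ, 0 < t.re →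
      ‖∫ σ in Set.Ici S, γ σ * Complex.exp (-(σ : ℂ) * t)‖ ≤
        R * F * t.re ^ (-(K + 1)) * Real.exp (-S * t.re) *
          (1 + (S * t.re) ^ 2) ^ (K / 2) := by
  refine ⟨2 ^ (K / 2) * 2 ^ K * (1 + Gamma (K + 1)), by positivity, 1, one_pos,
    fun S hS t ht ↦ ?_⟩
  rw [integral_Ici_eq_integral_Ioi, setIntegral_Ioi_eq_setIntegral_Ioi_zero_add]
  calc ‖∫ u in Ioi 0, γ (u + S) * Complex.exp (-((u + S : ℝ) : ℂ) * t)‖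
      ≤ ∫ u in Ioi 0, 2 ^ (K / 2) * 2 ^ K * F * exp (-S * t.re) *
          ((S ^ K + u ^ K) * exp (-(t.re * u))) :=
        norm_integral_le_of_norm_le
          ((integrableOn_Ioi_add_rpow_mul_exp_neg_mul (by linarith) ht S).const_mul _)
          ((ae_restrict_iff' measurableSet_Ioi).2 <| ae_of_all _ fun u hu ↦
            norm_mul_cexp_neg_mul_le hK hF.le hbd hS.le (le_of_lt hu) t)
    _ = 2 ^ (K / 2) * 2 ^ K * F * exp (-S * t.re) *
          ∫ u in Ioi 0, (S ^ K + u ^ K) * exp (-(t.re * u)) := integral_const_mul _ _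
    _ ≤ 2 ^ (K / 2) * 2 ^ K * F * exp (-S * t.re) *
          ((1 + Gamma (K + 1)) * t.re ^ (-(K + 1)) * (1 + (S * t.re) ^ 2) ^ (K / 2)) := by
        gcongr
        exact integral_Ioi_add_rpow_mul_exp_neg_mul_le hK ht (by linarith)
    _ = _ := by ring

/-- Quantitative tail estimate for the Laplace transform: there exist `R > 0`
and `Σ₀ > 0` such that for `Σ > Σ₀` and `Re t > 0`,
`|∫_Σ^∞ γ(σ)e^{-σt}dσ| ≤ R·F·(Re t)^{-(K+1)}·e^{-Σ Re t}·(1+(Σ Re t)²)^{K/2}`. -/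
theorem laplace_tail_quantitative (K F : ℝ) (hK : 0 ≤ K) (hF : 0 < F)
    (γ : ℝ → ℂ) (hmeas : Measurable γ)
    (hsupp : ∀ σ : ℝ, σ < 0 → γ σ = 0)
    (hbd : ∀ σ : ℝ, 0 ≤ σ → ‖γ σ‖ ≤ F * (1 + σ ^ 2) ^ (K / 2)) :
    ∃ R : ℝ, 0 < R ∧ ∃ S₀ : ℝ, 0 < S₀ ∧ ∀ S : ℝ, S₀ < S → ∀ t : ℂ, 0 < t.re →
      ‖∫ σ in Set.Ici S, γ σ * Complex.exp (-(σ : ℂ) * t)‖ ≤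
        R * F * t.re ^ (-(K + 1)) * Real.exp (-S * t.re) *
          (1 + (S * t.re) ^ 2) ^ (K / 2) :=
  laplace_tail_quantitative_general K F hK hF γ hbd
end

section
/- Let T > 0, let N and M be natural numbers with M ≥ N ≥ 1, and let Q : [-T,T] → ℂ be of class C^N with Q^{(j)} ∈ L¹[-T,T] for 0 ≤ j ≤ N. Then there is a constant R depending only on N and M such that for all Σ > 0 and T ≥ 1, |∫_{-T}^{T} Q(τ) e^{iτΣ} (1 - τ²/T²)^M dτ| ≤ R · Σ^{-N} · Σ_{j=0}^{N} ‖Q^{(j)}‖_{L¹[-T,T]}. -/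
open MeasureTheory intervalIntegral Set

namespace NSP

theorem iDW_eq_iD {F : Type*} [NormedAddCommGroup F] [NormedSpace ℝ F]
    (f : ℝ → F) (hf : ContDiff ℝ (⊤ : ℕ∞) f) {s : Set ℝ} (hs : UniqueDiffOn ℝ s) (n : ℕ) :
    ∀ x ∈ s, iteratedDerivWithin n f s x = iteratedDeriv n f x := by
  induction n with
  | zero => intro x hx; simp [iteratedDerivWithin_zero, iteratedDeriv_zero]
  | succ n IH =>
    intro x hx
    rw [iteratedDerivWithin_succ, iteratedDeriv_succ]
    rw [derivWithin_congr (fun y hy => IH y hy) (IH x hx)]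
    exact (hf.differentiable_iteratedDeriv n
      (by exact_mod_cast (WithTop.coe_lt_top _)) x).derivWithin (hs x hx)

theorem hasDerivAt_ofRealC (x : ℝ) : HasDerivAt (fun t : ℝ => (t:ℂ)) 1 x := by
  simpa using (hasDerivAt_id x).ofReal_comp

theorem contDiff_ofRealC : ContDiff ℝ (⊤ : ℕ∞) (fun t : ℝ => (t:ℂ)) :=
  Complex.ofRealCLM.contDiff

section Wc
variable (T : ℝ)

noncomputable def Wc : ℝ → ℂ := fun τ => 1 - (τ:ℂ)^2/(T:ℂ)^2

theorem Wc_hasDerivAt (τ : ℝ) : HasDerivAt (Wc T) (-(2*(τ:ℂ)/(T:ℂ)^2)) τ := by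
  have h1 : HasDerivAt (fun t : ℝ => (t:ℂ)^2) (2*(τ:ℂ)) τ := by
    have := (hasDerivAt_ofRealC τ).mul (hasDerivAt_ofRealC τ)
    simp only [one_mul, mul_one] at this
    have h0 : HasDerivAt (fun t : ℝ => (t:ℂ)*(t:ℂ)) ((τ:ℂ)+τ) τ := this
    have e1 : (fun t : ℝ => (t:ℂ)^2) = fun t : ℝ => (t:ℂ)*(t:ℂ) := by funext t; ring
    rw [e1, two_mul]; exact h0
  have := ((h1.div_const ((T:ℂ)^2)).const_sub 1)
  unfold Wc
  simpa [div_eq_mul_inv, mul_comm, mul_assoc, neg_div] using this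

theorem Wc_contDiff : ContDiff ℝ (⊤ : ℕ∞) (Wc T) := by
  have h := contDiff_ofRealC
  have : Wc T = fun τ : ℝ => 1 - ((τ:ℂ)*(τ:ℂ))/(T:ℂ)^2 := by
    funext τ; simp [Wc, pow_two]
  rw [this]
  exact contDiff_const.sub ((h.mul h).div_const _)

theorem iteratedDeriv_Wc_one : iteratedDeriv 1 (Wc T) = fun τ : ℝ => -(2*(τ:ℂ)/(T:ℂ)^2) := by
  funext τ
  rw [iteratedDeriv_one]
  exact (Wc_hasDerivAt T τ).deriv

theorem iteratedDeriv_Wc_two : iteratedDeriv 2 (Wc T) = fun _ => -(2/(T:ℂ)^2) := by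
  funext τ
  rw [show (2:ℕ) = 1 + 1 from rfl, iteratedDeriv_succ, iteratedDeriv_Wc_one]
  have : HasDerivAt (fun τ:ℝ => -(2*(τ:ℂ)/(T:ℂ)^2)) (-(2/(T:ℂ)^2)) τ := by
    have := ((hasDerivAt_ofRealC τ).const_mul (2:ℂ)).div_const ((T:ℂ)^2)
    have h2 : HasDerivAt (fun τ:ℝ => 2*(τ:ℂ)/(T:ℂ)^2) (2/(T:ℂ)^2) τ := by simpa using this
    exact h2.neg
  exact this.deriv

theorem iteratedDeriv_Wc_ge3 (j : ℕ) (hj : 3 ≤ j) : iteratedDeriv j (Wc T) = fun _ => 0 := by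
  induction j with
  | zero => omega
  | succ j IH =>
    rcases Nat.lt_or_ge j 3 with h | h
    · interval_cases j
      · omega
      · omega
      · rw [iteratedDeriv_succ, iteratedDeriv_Wc_two]
        funext τ; simp
    · rw [iteratedDeriv_succ, IH h]
      funext τ; simp

theorem Wc_norm_le {T τ : ℝ} (hT : 1 ≤ T) (hτ : τ ∈ Icc (-T) T) : ‖Wc T τ‖ ≤ 1 := by
  have hT0 : (0:ℝ) < T := by linarith
  have h1 : Wc T τ = ((1 - τ^2/T^2 : ℝ) : ℂ) := by
    unfold Wc; push_cast; ring
  rw [h1, Complex.norm_real, Real.norm_eq_abs]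
  have h2 : τ^2 ≤ T^2 := by
    have := abs_le.2 ⟨hτ.1, hτ.2⟩
    nlinarith [abs_nonneg τ, sq_abs τ]
  have h3 : 0 ≤ τ^2/T^2 := by positivity
  have h4 : τ^2/T^2 ≤ 1 := by
    rw [div_le_one (by positivity)]; exact h2
  rw [abs_le]; constructor <;> nlinarith

theorem norm_iDW_Wc_le {T τ : ℝ} (hT : 1 ≤ T) (hτ : τ ∈ Icc (-T) T) (j : ℕ) :
    ‖iteratedDerivWithin j (Wc T) (Icc (-T) T) τ‖ ≤ 2 := by
  have hT0 : (0:ℝ) < T := by linarith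
  have hs : UniqueDiffOn ℝ (Icc (-T) T) := uniqueDiffOn_Icc (by linarith)
  rw [iDW_eq_iD _ (Wc_contDiff T) hs j τ hτ]
  match j with
  | 0 => rw [iteratedDeriv_zero]; linarith [Wc_norm_le hT hτ]
  | 1 =>
    rw [iteratedDeriv_Wc_one]
    simp only [norm_neg, norm_mul, norm_div, norm_pow, Complex.norm_real,
      Complex.norm_ofNat, Real.norm_eq_abs, abs_of_pos hT0]
    have h1 : |τ| ≤ T := abs_le.2 ⟨by linarith [hτ.1], hτ.2⟩
    rw [div_le_iff₀ (by positivity)]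
    nlinarith [abs_nonneg τ]
  | 2 =>
    rw [iteratedDeriv_Wc_two]
    simp only [norm_neg, norm_div, norm_pow, Complex.norm_real,
      Complex.norm_ofNat, Real.norm_eq_abs, abs_of_pos hT0]
    rw [div_le_iff₀ (by positivity)]
    nlinarith
  | (j+3) =>
    rw [iteratedDeriv_Wc_ge3 T (j+3) (by omega)]
    simp

end Wc

theorem contDiff_idC : ContDiff ℝ (⊤ : ℕ∞) (fun τ : ℝ => (τ:ℂ)) := contDiff_ofRealC

theorem norm_iDW_idC_le {T τ : ℝ} (hT : 1 ≤ T) (hτ : τ ∈ Icc (-T) T) (j : ℕ) :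
    ‖iteratedDerivWithin j (fun τ : ℝ => (τ:ℂ)) (Icc (-T) T) τ‖ ≤ T := by
  have hs : UniqueDiffOn ℝ (Icc (-T) T) := uniqueDiffOn_Icc (by linarith)
  rw [iDW_eq_iD _ contDiff_idC hs j τ hτ]
  match j with
  | 0 =>
    rw [iteratedDeriv_zero]
    rw [Complex.norm_real, Real.norm_eq_abs]
    exact abs_le.2 ⟨by linarith [hτ.1], hτ.2⟩
  | 1 =>
    rw [iteratedDeriv_one]
    rw [show deriv (fun τ : ℝ => (τ:ℂ)) τ = 1 from (hasDerivAt_ofRealC τ).deriv]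
    simpa using hT
  | (j+2) =>
    have h1 : iteratedDeriv (j+2) (fun τ : ℝ => (τ:ℂ)) = fun _ => 0 := by
      induction j with
      | zero =>
        rw [show (0:ℕ)+2 = 1 + 1 from rfl, iteratedDeriv_succ, iteratedDeriv_one]
        have : deriv (fun τ : ℝ => (τ:ℂ)) = fun _ => 1 := by
          funext x; exact (hasDerivAt_ofRealC x).deriv
        rw [this]; funext x; simp
      | succ j IH =>
        rw [iteratedDeriv_succ, IH]
        funext x; simp
    rw [h1]; simp; linarith

theorem norm_iDW_mul_le {f g : ℝ → ℂ} {s : Set ℝ} {N : WithTop ℕ∞}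
    (hf : ContDiffOn ℝ N f s) (hg : ContDiffOn ℝ N g s) (hs : UniqueDiffOn ℝ s)
    {x : ℝ} (hx : x ∈ s) {n : ℕ} (hn : (n:WithTop ℕ∞) ≤ N) :
    ‖iteratedDerivWithin n (fun y => f y * g y) s x‖ ≤
      ∑ i ∈ Finset.range (n+1), (n.choose i : ℝ) * ‖iteratedDerivWithin i f s x‖ *
        ‖iteratedDerivWithin (n-i) g s x‖ := by
  simp only [← norm_iteratedFDerivWithin_eq_norm_iteratedDerivWithin]
  exact norm_iteratedFDerivWithin_mul_le hf hg hs hx hn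


theorem hasDerivAt_pow_comp {f : ℝ → ℂ} {f' : ℂ} {x : ℝ} (h : HasDerivAt f f' x) (k : ℕ) :
    HasDerivAt (fun τ => f τ ^ k) ((k:ℂ) * f x ^ (k-1) * f') x := by
  induction k with
  | zero => simpa using hasDerivAt_const x (1:ℂ)
  | succ k IH =>
    have h2 := IH.mul h
    have heq : ((fun τ => f τ ^ k) * f) = fun τ => f τ ^ (k+1) := by
      funext τ; rw [Pi.mul_apply, ← pow_succ]
    rw [heq] at h2
    refine h2.congr_deriv ?_
    cases k with
    | zero => simp
    | succ k =>
      simp only [Nat.add_sub_cancel]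
      push_cast
      ring

/-- exp factor derivative -/
theorem hasDerivAt_expI (S : ℝ) (τ : ℝ) :
    HasDerivAt (fun τ : ℝ => Complex.exp (Complex.I * τ * S))
      (Complex.I * S * Complex.exp (Complex.I * τ * S)) τ := by
  have h1 : HasDerivAt (fun τ : ℝ => Complex.I * (τ:ℂ) * (S:ℂ)) (Complex.I * S) τ := by
    have := ((hasDerivAt_ofRealC τ).const_mul Complex.I).mul_const (S:ℂ)
    simpa [mul_comm, mul_assoc] using this
  simpa [mul_comm] using h1.cexp


theorem ibp_step {T S : ℝ} (hT : 1 ≤ T) (hS : 0 < S) {m : ℕ} (hm : 1 ≤ m) {Q : ℝ → ℂ}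
    (hQ : ContDiffOn ℝ 1 Q (Icc (-T) T)) :
    ‖∫ τ in (-T)..T, Q τ * Complex.exp (Complex.I*τ*S) * Wc T τ ^ m‖ =
    (1/S) * ‖∫ τ in (-T)..T,
      (derivWithin Q (Icc (-T) T) τ * Wc T τ - (2*(m:ℂ)/(T:ℂ)^2) * ((τ:ℂ) * Q τ)) *
        Complex.exp (Complex.I*τ*S) * Wc T τ ^ (m-1)‖ := by
  obtain ⟨k, rfl⟩ : ∃ k, m = k + 1 := ⟨m - 1, by omega⟩
  have hT0 : (0:ℝ) < T := by linarith
  have hlt : -T < T := by linarith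
  have hab : -T ≤ T := le_of_lt hlt
  set K := Icc (-T) T with hK
  have hs : UniqueDiffOn ℝ K := uniqueDiffOn_Icc hlt
  set c : ℂ := Complex.I * S with hcdef
  have hc : c ≠ 0 :=
    mul_ne_zero Complex.I_ne_zero (by exact_mod_cast hS.ne')
  set P : ℝ → ℂ := derivWithin Q K with hP
  set c2 : ℂ := 2*((k:ℂ)+1)/(T:ℂ)^2 with hc2
  set e : ℝ → ℂ := fun τ => Complex.exp (Complex.I*τ*S) with he
  set Q1 : ℝ → ℂ := fun τ => P τ * Wc T τ - c2 * ((τ:ℂ) * Q τ) with hQ1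
  set f : ℝ → ℂ := fun τ => Q τ * e τ * Wc T τ ^ (k+1) with hf
  set g : ℝ → ℂ := fun τ => Q1 τ * e τ * Wc T τ ^ k with hg
  set H : ℝ → ℂ := fun τ => Q τ * Wc T τ ^ (k+1) * e τ / c with hH
  -- continuity facts
  have hQc : ContinuousOn Q K := hQ.continuousOn
  have hPc : ContinuousOn P K := hQ.continuousOn_derivWithin hs le_rfl
  have hWcont : Continuous (Wc T) := (Wc_contDiff T).continuous
  have hecont : Continuous e := by
    apply Complex.continuous_exp.comp
    continuity
  have hfc : ContinuousOn f K :=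
    ((hQc.mul hecont.continuousOn).mul ((hWcont.continuousOn).pow _))
  have hgc : ContinuousOn g K := by
    apply ContinuousOn.mul
    apply ContinuousOn.mul
    · exact (hPc.mul hWcont.continuousOn).sub
        (continuousOn_const.mul ((Complex.continuous_ofReal.continuousOn).mul hQc))
    · exact hecont.continuousOn
    · exact (hWcont.continuousOn).pow _
  have hHc : ContinuousOn H K :=
    (((hQc.mul ((hWcont.continuousOn).pow _)).mul hecont.continuousOn).div_const c)
  -- derivative of H on the interior
  have hHd : ∀ τ ∈ Ioo (-T) T, HasDerivAt H (g τ / c + f τ) τ := by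
    intro τ hτ
    have hτK : τ ∈ K := Ioo_subset_Icc_self hτ
    have hKn : K ∈ nhds τ := Icc_mem_nhds hτ.1 hτ.2
    have hdwa : DifferentiableWithinAt ℝ Q K τ :=
      (hQ.differentiableOn one_ne_zero) τ hτK
    have hda : DifferentiableAt ℝ Q τ := hdwa.differentiableAt hKn
    have hQd : HasDerivAt Q (P τ) τ := by
      have h1 : P τ = deriv Q τ := derivWithin_of_mem_nhds hKn
      rw [h1]
      exact hda.hasDerivAt
    have hWd := Wc_hasDerivAt T τ
    have hWm := hasDerivAt_pow_comp hWd (k+1)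
    have hFm := hQd.mul hWm
    have hE := hasDerivAt_expI S τ
    have hHd0 := (hFm.mul hE).div_const c
    refine hHd0.congr_deriv ?_
    simp only [hg, hf, hQ1, he, hcdef, hc2, Pi.mul_apply, Nat.add_sub_cancel]
    push_cast
    have hS' : (S:ℂ) ≠ 0 := by exact_mod_cast hS.ne'
    field_simp
    ring
  -- FTC
  have hint : IntervalIntegrable (fun τ => g τ / c + f τ) volume (-T) T := by
    apply ContinuousOn.intervalIntegrable
    rw [uIcc_of_le hab]
    exact (hgc.div_const c).add hfc
  have hftc := integral_eq_sub_of_hasDeriv_right_of_le hab hHc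
    (fun x hx => (hHd x hx).hasDerivWithinAt) hint
  have hT2ne : (T:ℂ)^2 ≠ 0 := pow_ne_zero 2 (by exact_mod_cast hT0.ne')
  have hWT : Wc T T = 0 := by
    simp only [Wc]
    rw [div_self hT2ne, sub_self]
  have hWnT : Wc T (-T) = 0 := by
    simp only [Wc]
    have h : ((-T:ℝ):ℂ)^2 = (T:ℂ)^2 := by push_cast; ring
    rw [h, div_self hT2ne, sub_self]
  have hH0 : H T - H (-T) = 0 := by
    simp [hH, hWT, hWnT, zero_pow (Nat.succ_ne_zero k)]
  rw [hH0] at hftc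
  have hgint : IntervalIntegrable g volume (-T) T := by
    apply ContinuousOn.intervalIntegrable; rwa [uIcc_of_le hab]
  have hfint : IntervalIntegrable f volume (-T) T := by
    apply ContinuousOn.intervalIntegrable; rwa [uIcc_of_le hab]
  rw [intervalIntegral.integral_add (hgint.div_const c) hfint,
    intervalIntegral.integral_div] at hftc
  have hfeq : ∫ τ in (-T)..T, f τ = -((∫ τ in (-T)..T, g τ) / c) := by
    linear_combination hftc
  have hgoal1 : (∫ τ in (-T)..T, Q τ * Complex.exp (Complex.I*τ*S) * Wc T τ ^ (k+1))
      = ∫ τ in (-T)..T, f τ := rfl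
  have hgoal2 : (∫ τ in (-T)..T,
      (derivWithin Q K τ * Wc T τ - (2*((k+1:ℕ):ℂ))/(T:ℂ)^2 * ((τ:ℂ) * Q τ)) *
        Complex.exp (Complex.I*τ*S) * Wc T τ ^ (k+1-1)) = ∫ τ in (-T)..T, g τ := by
    apply intervalIntegral.integral_congr
    intro x hx
    simp only [hg, hQ1, he, hc2, Nat.add_sub_cancel]
    push_cast
    ring
  rw [hgoal1, hgoal2, hfeq, norm_neg, norm_div]
  have : ‖c‖ = S := by
    simp [hcdef, abs_of_pos hS]
  rw [this]
  ring


theorem norm_expI (S τ : ℝ) : ‖Complex.exp (Complex.I*τ*S)‖ = 1 := by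
  rw [Complex.norm_exp]
  simp [Complex.mul_re]

set_option maxHeartbeats 1000000 in
theorem pointwise_bound {T : ℝ} (hT : 1 ≤ T) {n m : ℕ} {Q : ℝ → ℂ}
    (hQ : ContDiffOn ℝ (n+1) Q (Set.Icc (-T) T)) {τ : ℝ} (hτ : τ ∈ Set.Icc (-T) T) {j : ℕ}
    (hj : j ≤ n) :
    ‖iteratedDerivWithin j
        (fun τ => derivWithin Q (Set.Icc (-T) T) τ * Wc T τ - (2*(m:ℂ)/(T:ℂ)^2) * ((τ:ℂ) * Q τ))
        (Set.Icc (-T) T) τ‖ ≤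
      (2*m+2) * 2^n * ∑ i ∈ Finset.range (n+2), ‖iteratedDerivWithin i Q (Set.Icc (-T) T) τ‖ := by
  have hT0 : (0:ℝ) < T := by linarith
  have hlt : -T < T := by linarith
  have hs : UniqueDiffOn ℝ (Icc (-T) T) := uniqueDiffOn_Icc hlt
  set A : ℝ := ∑ i ∈ Finset.range (n+2), ‖iteratedDerivWithin i Q (Icc (-T) T) τ‖ with hA
  have hA0 : 0 ≤ A := Finset.sum_nonneg fun i _ => norm_nonneg _
  have hterm : ∀ i, i ≤ n+1 → ‖iteratedDerivWithin i Q (Icc (-T) T) τ‖ ≤ A := by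
    intro i hi
    exact Finset.single_le_sum (f := fun i => ‖iteratedDerivWithin i Q (Icc (-T) T) τ‖)
      (fun i _ => norm_nonneg _) (Finset.mem_range.2 (by omega))
  -- smoothness facts
  have hPn : ContDiffOn ℝ n (derivWithin Q (Icc (-T) T)) (Icc (-T) T) :=
    hQ.derivWithin hs (by exact_mod_cast le_rfl)
  have hWn : ContDiffOn ℝ n (Wc T) (Icc (-T) T) := ((Wc_contDiff T).of_le (mod_cast le_top)).contDiffOn
  have hQn : ContDiffOn ℝ n Q (Icc (-T) T) := hQ.of_le (by exact_mod_cast Nat.le_succ n)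
  have hidn : ContDiffOn ℝ n (fun τ : ℝ => (τ:ℂ)) (Icc (-T) T) :=
    ((contDiff_idC).of_le (mod_cast le_top)).contDiffOn
  have hidQ : ContDiffOn ℝ n (fun τ : ℝ => (τ:ℂ) * Q τ) (Icc (-T) T) := hidn.mul hQn
  have hPW : ContDiffOn ℝ n (fun τ => derivWithin Q (Icc (-T) T) τ * Wc T τ) (Icc (-T) T) :=
    hPn.mul hWn
  -- split the iterated derivative
  have h1 : iteratedDerivWithin j
      (fun τ => derivWithin Q (Icc (-T) T) τ * Wc T τ - (2*(m:ℂ)/(T:ℂ)^2) * ((τ:ℂ) * Q τ))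
      (Icc (-T) T) τ =
      iteratedDerivWithin j (fun τ => derivWithin Q (Icc (-T) T) τ * Wc T τ) (Icc (-T) T) τ -
        iteratedDerivWithin j (fun τ : ℝ => (2*(m:ℂ)/(T:ℂ)^2) * ((τ:ℂ) * Q τ)) (Icc (-T) T) τ :=
    iteratedDerivWithin_sub (n := j) hτ hs (hPW.of_le (by exact_mod_cast hj) τ hτ)
      ((contDiffOn_const.mul hidQ).of_le (by exact_mod_cast hj) τ hτ)
  have h2 : iteratedDerivWithin j (fun τ : ℝ => (2*(m:ℂ)/(T:ℂ)^2) * ((τ:ℂ) * Q τ))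
      (Icc (-T) T) τ =
      (2*(m:ℂ)/(T:ℂ)^2) * iteratedDerivWithin j (fun τ : ℝ => (τ:ℂ) * Q τ) (Icc (-T) T) τ :=
    iteratedDerivWithin_const_smul (R := ℂ) hτ hs _ (hidQ.of_le (by exact_mod_cast hj) τ hτ)
  rw [h1, h2]
  have hnormc2 : ‖(2*(m:ℂ)/(T:ℂ)^2)‖ = 2*m/T^2 := by
    simp only [norm_div, norm_mul, norm_pow, Complex.norm_real,
      Complex.norm_natCast, Complex.norm_ofNat, Real.norm_eq_abs, abs_of_pos hT0]
  have hsumchoose : ∑ i ∈ Finset.range (j+1), (j.choose i : ℝ) = 2^j := by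
    exact_mod_cast Nat.sum_range_choose j
  have h2j : (2:ℝ)^j ≤ 2^n := pow_le_pow_right₀ (by norm_num) hj
  -- bound term 1
  have hb1 : ‖iteratedDerivWithin j (fun τ => derivWithin Q (Icc (-T) T) τ * Wc T τ)
      (Icc (-T) T) τ‖ ≤ 2^n * (2*A) := by
    refine le_trans (norm_iDW_mul_le (N := (j:WithTop ℕ∞)) (hPn.of_le (by exact_mod_cast hj))
      (hWn.of_le (by exact_mod_cast hj)) hs hτ le_rfl) ?_
    have hstep : ∀ i ∈ Finset.range (j+1),
        (j.choose i : ℝ) * ‖iteratedDerivWithin i (derivWithin Q (Icc (-T) T)) (Icc (-T) T) τ‖ *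
          ‖iteratedDerivWithin (j-i) (Wc T) (Icc (-T) T) τ‖ ≤ (j.choose i : ℝ) * (A * 2) := by
      intro i hi
      have hiP : ‖iteratedDerivWithin i (derivWithin Q (Icc (-T) T)) (Icc (-T) T) τ‖ ≤ A := by
        rw [← iteratedDerivWithin_succ']
        exact hterm (i+1) (by simp only [Finset.mem_range] at hi; omega)
      have hiW := norm_iDW_Wc_le hT hτ (j-i)
      calc (j.choose i : ℝ) * ‖iteratedDerivWithin i (derivWithin Q (Icc (-T) T))
            (Icc (-T) T) τ‖ * ‖iteratedDerivWithin (j-i) (Wc T) (Icc (-T) T) τ‖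
          ≤ ((j.choose i : ℝ) * A) * 2 :=
            mul_le_mul (mul_le_mul_of_nonneg_left hiP (Nat.cast_nonneg _)) hiW
              (norm_nonneg _) (mul_nonneg (Nat.cast_nonneg _) hA0)
        _ = (j.choose i : ℝ) * (A * 2) := by ring
    refine le_trans (Finset.sum_le_sum hstep) ?_
    rw [← Finset.sum_mul, hsumchoose]
    calc (2:ℝ)^j * (A*2) ≤ 2^n * (A*2) :=
          mul_le_mul_of_nonneg_right h2j (by linarith)
      _ = 2^n * (2*A) := by ring
  -- bound term 2
  have hb2 : ‖iteratedDerivWithin j (fun τ : ℝ => (τ:ℂ) * Q τ) (Icc (-T) T) τ‖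
      ≤ 2^n * (T*A) := by
    refine le_trans (norm_iDW_mul_le (N := (j:WithTop ℕ∞)) (hidn.of_le (by exact_mod_cast hj))
      (hQn.of_le (by exact_mod_cast hj)) hs hτ le_rfl) ?_
    have hstep : ∀ i ∈ Finset.range (j+1),
        (j.choose i : ℝ) * ‖iteratedDerivWithin i (fun τ : ℝ => (τ:ℂ)) (Icc (-T) T) τ‖ *
          ‖iteratedDerivWithin (j-i) Q (Icc (-T) T) τ‖ ≤ (j.choose i : ℝ) * (T * A) := by
      intro i hi
      have hiI := norm_iDW_idC_le hT hτ i
      have hiQ : ‖iteratedDerivWithin (j-i) Q (Icc (-T) T) τ‖ ≤ A := hterm (j-i) (by omega)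
      calc (j.choose i : ℝ) * ‖iteratedDerivWithin i (fun τ : ℝ => (τ:ℂ)) (Icc (-T) T) τ‖ *
            ‖iteratedDerivWithin (j-i) Q (Icc (-T) T) τ‖
          ≤ ((j.choose i : ℝ) * T) * A :=
            mul_le_mul (mul_le_mul_of_nonneg_left hiI (Nat.cast_nonneg _)) hiQ
              (norm_nonneg _) (mul_nonneg (Nat.cast_nonneg _) hT0.le)
        _ = (j.choose i : ℝ) * (T * A) := by ring
    refine le_trans (Finset.sum_le_sum hstep) ?_
    rw [← Finset.sum_mul, hsumchoose]
    exact mul_le_mul_of_nonneg_right h2j (mul_nonneg hT0.le hA0)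
  calc ‖iteratedDerivWithin j (fun τ => derivWithin Q (Icc (-T) T) τ * Wc T τ) (Icc (-T) T) τ -
        (2*(m:ℂ)/(T:ℂ)^2) * iteratedDerivWithin j (fun τ : ℝ => (τ:ℂ) * Q τ) (Icc (-T) T) τ‖
      ≤ ‖iteratedDerivWithin j (fun τ => derivWithin Q (Icc (-T) T) τ * Wc T τ) (Icc (-T) T) τ‖ +
        ‖(2*(m:ℂ)/(T:ℂ)^2)‖ * ‖iteratedDerivWithin j (fun τ : ℝ => (τ:ℂ) * Q τ)
          (Icc (-T) T) τ‖ := by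
        refine le_trans (norm_sub_le _ _) ?_
        rw [norm_mul]
    _ ≤ 2^n * (2*A) + (2*m/T^2) * (2^n * (T*A)) := by
        apply add_le_add hb1
        rw [hnormc2]
        exact mul_le_mul_of_nonneg_left hb2 (by positivity)
    _ ≤ (2*m+2) * 2^n * A := by
        have h2n : (0:ℝ) < 2^n := by positivity
        have h1T : 1/T ≤ 1 := by rw [div_le_one hT0]; exact hT
        have hprod0 : (0:ℝ) ≤ (2*m) * 2^n * A :=
          mul_nonneg (mul_nonneg (by positivity) h2n.le) hA0
        have heq : (2*(m:ℝ)/T^2) * (2^n * (T*A)) = ((2*m) * 2^n * A) * (1/T) := by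
          field_simp
        have hTA : (2*(m:ℝ)/T^2) * (2^n * (T*A)) ≤ (2*m) * 2^n * A := by
          rw [heq]
          calc ((2*(m:ℝ)) * 2^n * A) * (1/T) ≤ ((2*m) * 2^n * A) * 1 :=
                mul_le_mul_of_nonneg_left h1T hprod0
            _ = (2*m) * 2^n * A := mul_one _
        calc (2:ℝ)^n * (2*A) + (2*(m:ℝ)/T^2) * (2^n * (T*A))
            ≤ 2^n * (2*A) + (2*m) * 2^n * A := by linarith
          _ = (2*m+2) * 2^n * A := by ring


set_option maxHeartbeats 1000000 in
theorem key : ∀ n m : ℕ, n ≤ m → ∃ R : ℝ, 0 < R ∧ ∀ T : ℝ, 1 ≤ T → ∀ Q : ℝ → ℂ,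
    ContDiffOn ℝ n Q (Set.Icc (-T) T) → ∀ S : ℝ, 0 < S →
    ‖∫ τ in (-T)..T, Q τ * Complex.exp (Complex.I*τ*S) * Wc T τ ^ m‖ ≤
      R / S^n * ∑ j ∈ Finset.range (n+1),
        ∫ τ in (-T)..T, ‖iteratedDerivWithin j Q (Set.Icc (-T) T) τ‖ := by
  intro n
  induction n with
  | zero =>
    intro m _
    refine ⟨1, one_pos, ?_⟩
    intro T hT Q hQ S hS
    have hT0 : (0:ℝ) < T := by linarith
    have hab : -T ≤ T := by linarith
    have hecont : Continuous (fun τ : ℝ => Complex.exp (Complex.I*τ*S)) := by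
      apply Complex.continuous_exp.comp; continuity
    have hfc : ContinuousOn (fun τ => Q τ * Complex.exp (Complex.I*τ*S) * Wc T τ ^ m)
        (Icc (-T) T) :=
      (hQ.continuousOn.mul hecont.continuousOn).mul
        (((Wc_contDiff T).continuous.continuousOn).pow m)
    have hint1 : IntervalIntegrable
        (fun τ => ‖Q τ * Complex.exp (Complex.I*τ*S) * Wc T τ ^ m‖) volume (-T) T := by
      apply ContinuousOn.intervalIntegrable
      rw [uIcc_of_le hab]; exact hfc.norm
    have hint2 : IntervalIntegrable (fun τ => ‖Q τ‖) volume (-T) T := by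
      apply ContinuousOn.intervalIntegrable
      rw [uIcc_of_le hab]; exact hQ.continuousOn.norm
    calc ‖∫ τ in (-T)..T, Q τ * Complex.exp (Complex.I*τ*S) * Wc T τ ^ m‖
        ≤ ∫ τ in (-T)..T, ‖Q τ * Complex.exp (Complex.I*τ*S) * Wc T τ ^ m‖ :=
          intervalIntegral.norm_integral_le_integral_norm hab
      _ ≤ ∫ τ in (-T)..T, ‖Q τ‖ := by
          apply intervalIntegral.integral_mono_on hab hint1 hint2
          intro τ hτ
          rw [norm_mul, norm_mul, norm_expI, norm_pow, mul_one]
          calc ‖Q τ‖ * ‖Wc T τ‖ ^ m ≤ ‖Q τ‖ * 1 :=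
                mul_le_mul_of_nonneg_left
                  (pow_le_one₀ (norm_nonneg _) (Wc_norm_le hT hτ)) (norm_nonneg _)
            _ = ‖Q τ‖ := mul_one _
      _ = 1 / S^0 * ∑ j ∈ Finset.range (0+1),
            ∫ τ in (-T)..T, ‖iteratedDerivWithin j Q (Icc (-T) T) τ‖ := by
          simp [iteratedDerivWithin_zero]
  | succ n IH =>
    intro m hnm
    obtain ⟨R', hR'pos, hIH⟩ := IH (m-1) (by omega)
    refine ⟨R' * ((n+1) * ((2*m+2)*2^n)), by positivity, ?_⟩
    intro T hT Q hQ S hS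
    have hT0 : (0:ℝ) < T := by linarith
    have hlt : -T < T := by linarith
    have hab : -T ≤ T := le_of_lt hlt
    have hs : UniqueDiffOn ℝ (Icc (-T) T) := uniqueDiffOn_Icc hlt
    -- smoothness of Q1
    have hPn : ContDiffOn ℝ n (derivWithin Q (Icc (-T) T)) (Icc (-T) T) :=
      hQ.derivWithin hs (by exact_mod_cast le_rfl)
    have hWn : ContDiffOn ℝ n (Wc T) (Icc (-T) T) := ((Wc_contDiff T).of_le (mod_cast le_top)).contDiffOn
    have hQn : ContDiffOn ℝ n Q (Icc (-T) T) := hQ.of_le (by exact_mod_cast Nat.le_succ n)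
    have hidn : ContDiffOn ℝ n (fun τ : ℝ => (τ:ℂ)) (Icc (-T) T) :=
      ((contDiff_idC).of_le (mod_cast le_top)).contDiffOn
    have hQ1 : ContDiffOn ℝ n
        (fun τ => derivWithin Q (Icc (-T) T) τ * Wc T τ - (2*(m:ℂ)/(T:ℂ)^2) * ((τ:ℂ) * Q τ))
        (Icc (-T) T) :=
      (hPn.mul hWn).sub (contDiffOn_const.mul (hidn.mul hQn))
    rw [ibp_step hT hS (by omega : 1 ≤ m)
      (hQ.of_le (by exact_mod_cast Nat.one_le_iff_ne_zero.2 (Nat.succ_ne_zero n)))]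
    have hIHQ1 := hIH T hT _ hQ1 S hS
    -- integrability of the derivative norms
    have hIntQ : ∀ i, i ≤ n+1 →
        IntervalIntegrable (fun τ => ‖iteratedDerivWithin i Q (Icc (-T) T) τ‖) volume (-T) T := by
      intro i hi
      apply ContinuousOn.intervalIntegrable
      rw [uIcc_of_le hab]
      exact (hQ.continuousOn_iteratedDerivWithin (by exact_mod_cast hi) hs).norm
    have hBnn : ∀ i ∈ Finset.range (n+2),
        0 ≤ ∫ τ in (-T)..T, ‖iteratedDerivWithin i Q (Icc (-T) T) τ‖ := by
      intro i _
      exact intervalIntegral.integral_nonneg hab (fun τ _ => norm_nonneg _)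
    have hB0 : 0 ≤ ∑ i ∈ Finset.range (n+2),
        ∫ τ in (-T)..T, ‖iteratedDerivWithin i Q (Icc (-T) T) τ‖ :=
      Finset.sum_nonneg hBnn
    -- per-term bound
    have hjbound : ∀ j ∈ Finset.range (n+1),
        (∫ τ in (-T)..T, ‖iteratedDerivWithin j
          (fun τ => derivWithin Q (Icc (-T) T) τ * Wc T τ - (2*(m:ℂ)/(T:ℂ)^2) * ((τ:ℂ) * Q τ))
          (Icc (-T) T) τ‖) ≤
        ((2*m+2)*2^n) * ∑ i ∈ Finset.range (n+2),
          ∫ τ in (-T)..T, ‖iteratedDerivWithin i Q (Icc (-T) T) τ‖ := by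
      intro j hj
      have hjn : j ≤ n := by simp only [Finset.mem_range] at hj; omega
      have hint1 : IntervalIntegrable (fun τ => ‖iteratedDerivWithin j
          (fun τ => derivWithin Q (Icc (-T) T) τ * Wc T τ - (2*(m:ℂ)/(T:ℂ)^2) * ((τ:ℂ) * Q τ))
          (Icc (-T) T) τ‖) volume (-T) T := by
        apply ContinuousOn.intervalIntegrable
        rw [uIcc_of_le hab]
        exact (hQ1.continuousOn_iteratedDerivWithin (by exact_mod_cast hjn) hs).norm
      have hint2 : IntervalIntegrable (fun τ => ((2*m+2)*2^n : ℝ) *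
          ∑ i ∈ Finset.range (n+2), ‖iteratedDerivWithin i Q (Icc (-T) T) τ‖) volume (-T) T := by
        apply ContinuousOn.intervalIntegrable
        rw [uIcc_of_le hab]
        apply ContinuousOn.mul continuousOn_const
        apply continuousOn_finset_sum
        intro i hi
        refine (hQ.continuousOn_iteratedDerivWithin ?_ hs).norm
        exact_mod_cast (by simp only [Finset.mem_range] at hi; omega : i ≤ n+1)
      calc (∫ τ in (-T)..T, ‖iteratedDerivWithin j
            (fun τ => derivWithin Q (Icc (-T) T) τ * Wc T τ - (2*(m:ℂ)/(T:ℂ)^2) * ((τ:ℂ) * Q τ))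
            (Icc (-T) T) τ‖)
          ≤ ∫ τ in (-T)..T, ((2*m+2)*2^n : ℝ) *
              ∑ i ∈ Finset.range (n+2), ‖iteratedDerivWithin i Q (Icc (-T) T) τ‖ := by
            apply intervalIntegral.integral_mono_on hab hint1 hint2
            intro τ hτ
            exact pointwise_bound hT hQ hτ hjn
        _ = ((2*m+2)*2^n : ℝ) * ∑ i ∈ Finset.range (n+2),
              ∫ τ in (-T)..T, ‖iteratedDerivWithin i Q (Icc (-T) T) τ‖ := by
            rw [intervalIntegral.integral_const_mul]
            congr 1
            apply intervalIntegral.integral_finset_sum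
            intro i hi
            exact hIntQ i (by simp only [Finset.mem_range] at hi; omega)
    have hsum1 : (∑ j ∈ Finset.range (n+1), ∫ τ in (-T)..T, ‖iteratedDerivWithin j
          (fun τ => derivWithin Q (Icc (-T) T) τ * Wc T τ - (2*(m:ℂ)/(T:ℂ)^2) * ((τ:ℂ) * Q τ))
          (Icc (-T) T) τ‖) ≤
        (n+1) * (((2*m+2)*2^n) * ∑ i ∈ Finset.range (n+2),
          ∫ τ in (-T)..T, ‖iteratedDerivWithin i Q (Icc (-T) T) τ‖) := by
      refine le_trans (Finset.sum_le_sum hjbound) ?_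
      rw [Finset.sum_const, Finset.card_range, nsmul_eq_mul]
      push_cast
      exact le_rfl
    calc (1/S) * ‖∫ τ in (-T)..T,
          (derivWithin Q (Icc (-T) T) τ * Wc T τ - (2*(m:ℂ)/(T:ℂ)^2) * ((τ:ℂ) * Q τ)) *
            Complex.exp (Complex.I*τ*S) * Wc T τ ^ (m-1)‖
        ≤ (1/S) * (R' / S^n * ∑ j ∈ Finset.range (n+1), ∫ τ in (-T)..T, ‖iteratedDerivWithin j
            (fun τ => derivWithin Q (Icc (-T) T) τ * Wc T τ - (2*(m:ℂ)/(T:ℂ)^2) * ((τ:ℂ) * Q τ))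
            (Icc (-T) T) τ‖) := by
          apply mul_le_mul_of_nonneg_left _ (by positivity)
          exact hIHQ1
      _ ≤ (1/S) * (R' / S^n * ((n+1) * (((2*m+2)*2^n) * ∑ i ∈ Finset.range (n+2),
            ∫ τ in (-T)..T, ‖iteratedDerivWithin i Q (Icc (-T) T) τ‖))) := by
          apply mul_le_mul_of_nonneg_left _ (by positivity)
          apply mul_le_mul_of_nonneg_left hsum1 (by positivity)
      _ = R' * ((n+1) * ((2*m+2)*2^n)) / S^(n+1) * ∑ i ∈ Finset.range (n+1+1),
            ∫ τ in (-T)..T, ‖iteratedDerivWithin i Q (Icc (-T) T) τ‖ := by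
          field_simp
          ring

end NSP

/-- Quantitative non-stationary-phase estimate: for `M ≥ N ≥ 1` there is a
constant `R = R(N,M)` such that for all `T ≥ 1`, all `Q ∈ C^N([-T,T])` and all
`Σ > 0`, `|∫_{-T}^{T} Q(τ)e^{iτΣ}(1-τ²/T²)^M dτ| ≤ R Σ^{-N} Σ_{j≤N} ‖Q^{(j)}‖_{L¹}`. -/
theorem nonstationary_phase_bound (N M : ℕ) (hN : 1 ≤ N) (hMN : N ≤ M) :
    ∃ R : ℝ, 0 < R ∧ ∀ T : ℝ, 1 ≤ T → ∀ Q : ℝ → ℂ,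
      ContDiffOn ℝ N Q (Set.Icc (-T) T) →
      ∀ S : ℝ, 0 < S →
      ‖∫ τ in (-T)..T, Q τ * Complex.exp (Complex.I * τ * S) *
          (((1 - τ ^ 2 / T ^ 2 : ℝ) : ℂ)) ^ M‖ ≤
        R / S ^ N *
          ∑ j ∈ Finset.range (N + 1),
            ∫ τ in (-T)..T, ‖iteratedDerivWithin j Q (Set.Icc (-T) T) τ‖ := by
  obtain ⟨R, hR, hbound⟩ := NSP.key N M hMN
  refine ⟨R, hR, ?_⟩
  intro T hT Q hQ S hS
  have heq : (∫ τ in (-T)..T, Q τ * Complex.exp (Complex.I * τ * S) *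
      (((1 - τ ^ 2 / T ^ 2 : ℝ) : ℂ)) ^ M) =
      ∫ τ in (-T)..T, Q τ * Complex.exp (Complex.I*τ*S) * NSP.Wc T τ ^ M := by
    apply intervalIntegral.integral_congr
    intro τ _
    have h : ((1 - τ ^ 2 / T ^ 2 : ℝ) : ℂ) = NSP.Wc T τ := by
      unfold NSP.Wc; push_cast; ring
    simp only [h]
  rw [heq]
  exact hbound T hT Q hQ S hS
end
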